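/- arXiv:2508.11879 — 2 statements merged into one kernel-verified Lean document; each statement's English description precedes it below -/
import Mathlib

section
/- Let P ∈ PD(w) and p a bump tile of P that is (A,k)-aligned (p lies weakly northwest of pipe k and (w_p, k) ∈ Inv(w⁻¹)). Then (P,p) is slidable: w⁻¹(w_p) > row(p), i.e., there exists a bump tile q in the same row as p with s_q = w_p. -/
open Equiv MvPolynomial

/-- A permutation of ℕ has finite support. -/
def FinSupp (w : Equiv.Perm ℕ) : Prop := {i | w i ≠ i}.Finite

/-- Inversion set Inv(w) = {(i,j) : i < j, w i > w j}. -/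
def invSet (w : Equiv.Perm ℕ) : Set (ℕ × ℕ) := {p | p.1 < p.2 ∧ w p.2 < w p.1}

/-- Co-inversion set coInv(w) = {(i,j) : i < j, w i < w j}. -/
def coinvSet (w : Equiv.Perm ℕ) : Set (ℕ × ℕ) := {p | p.1 < p.2 ∧ w p.1 < w p.2}

/-- Coxeter length ℓ(w) = |Inv(w)|. -/
noncomputable def len (w : Equiv.Perm ℕ) : ℕ := (invSet w).ncard

/-- Cover relation of left weak order: u = s_k * w with ℓ(u) = ℓ(w) + 1. -/
def WeakCover (w u : Equiv.Perm ℕ) : Prop :=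
  ∃ k, u = Equiv.swap k (k + 1) * w ∧ len u = len w + 1

/-- Left weak order: reflexive-transitive closure of weak covers. -/
def leL (w u : Equiv.Perm ℕ) : Prop := Relation.ReflTransGen WeakCover w u

/-- π avoids the pattern 132 (π is dominant). -/
def Avoids132 (π : Equiv.Perm ℕ) : Prop :=
  ¬ ∃ a b c : ℕ, a < b ∧ b < c ∧ π a < π c ∧ π c < π b

/-- Rothe diagram D(π) (0-indexed conventions). -/
def Rothe (π : Equiv.Perm ℕ) : Set (ℕ × ℕ) := {p | p.1 < π⁻¹ p.2 ∧ p.2 < π p.1}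

/-- Young diagram of a partition (0-indexed): row i has l i cells. -/
def yd (l : ℕ → ℕ) : Set (ℕ × ℕ) := {p | p.2 < l p.1}

/-- Conjugate partition (0-indexed): column j has |{i : l i > j}| cells. -/
noncomputable def conjPart (l : ℕ → ℕ) (j : ℕ) : ℕ := {i | j < l i}.ncard

/-- A pipe dream: a finite set of crossing tiles together with the (uniquely
determined) labels of the pipes on the four edges of each tile.  At a cross
tile the pipes pass straight through; at a bump tile the pipe from the north
exits west and the pipe from the east exits south.  Pipe j enters the quadrant
at the north edge of column j. -/
structure PipeDream where
  cross : Finset (ℕ × ℕ)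
  north : ℕ × ℕ → ℕ
  east : ℕ × ℕ → ℕ
  south : ℕ × ℕ → ℕ
  west : ℕ × ℕ → ℕ
  north_top : ∀ j, north (0, j) = j
  north_succ : ∀ i j, north (i + 1, j) = south (i, j)
  east_eq : ∀ i j, east (i, j) = west (i, j + 1)
  south_cross : ∀ p ∈ cross, south p = north p
  west_cross : ∀ p ∈ cross, west p = east p
  south_bump : ∀ p, p ∉ cross → south p = east p
  west_bump : ∀ p, p ∉ cross → west p = north p

namespace PipeDream

/-- Pipes a and b cross at position p. -/
def CrossAt (P : PipeDream) (a b : ℕ) (p : ℕ × ℕ) : Prop :=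
  p ∈ P.cross ∧ ({P.north p, P.east p} : Set ℕ) = {a, b}

/-- A pipe dream is reduced if no two pipes cross more than once. -/
def Reduced (P : PipeDream) : Prop :=
  ∀ a b p q, P.CrossAt a b p → P.CrossAt a b q → p = q

/-- P is a pipe dream for the permutation w: pipe a exits on the west edge at
row w⁻¹(a), i.e. the one-line notation read along the west edge is w. -/
def IsFor (P : PipeDream) (w : Equiv.Perm ℕ) : Prop := ∀ i, P.west (i, 0) = w i

/-- Pipe k passes through the tile p. -/
def OnPipe (P : PipeDream) (k : ℕ) (p : ℕ × ℕ) : Prop := P.north p = k ∨ P.east p = k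

/-- p lies weakly northwest of pipe k. -/
def NWOfPipe (P : PipeDream) (k : ℕ) (p : ℕ × ℕ) : Prop :=
  ∃ q, P.OnPipe k q ∧ p.1 ≤ q.1 ∧ p.2 ≤ q.2

end PipeDream

/-- The set of reduced pipe dreams for w. -/
def PD (w : Equiv.Perm ℕ) : Set PipeDream := {P | P.Reduced ∧ P.IsFor w}

/-- The set of π-dominated positions of a pipe dream P ∈ PD(w), where π is the
dominant permutation with Rothe diagram the Young diagram of l:
row(p) < λ'(π(w⁻¹(s_p))) (0-indexed), s_p being the pipe exiting p south. -/
noncomputable def dominated (π : Equiv.Perm ℕ) (l : ℕ → ℕ) (w : Equiv.Perm ℕ)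
    (P : PipeDream) : Set (ℕ × ℕ) :=
  {p | p.1 < conjPart l (π (w⁻¹ (P.south p)))}

/-- The Schubert polynomial as the pipe dream generating function. -/
noncomputable def Schub (w : Equiv.Perm ℕ) : MvPolynomial ℕ ℤ :=
  ∑ᶠ P ∈ PD w, ∏ p ∈ P.cross, X p.1

/-- The polynomial ring ℤ[x;y]: x-variables are `Sum.inl i`, y-variables `Sum.inr i`. -/
abbrev PolyXY := MvPolynomial (ℕ ⊕ ℕ) ℤ

/-- The field of rational functions in the x- and y-variables. -/
noncomputable abbrev RatXY := FractionRing PolyXY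

noncomputable def Xv (i : ℕ) : RatXY := algebraMap PolyXY RatXY (X (Sum.inl i))
noncomputable def Yv (i : ℕ) : RatXY := algebraMap PolyXY RatXY (X (Sum.inr i))

/-- The π-padded Schubert polynomial 𝔖_w^π(x;y) = y^λ · 𝔖_w(x₁/y₁, x₂/y₂, …),
viewed in the field of rational functions. -/
noncomputable def padded (l : ℕ → ℕ) (w : Equiv.Perm ℕ) : RatXY :=
  (∏ᶠ i, Yv i ^ l i) * (aeval (fun i => Xv i / Yv i) (Schub w))

/-- Δ = Σ_i x_i ∂/∂y_i. -/
noncomputable def deltaOp (f : PolyXY) : PolyXY :=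
  ∑ᶠ i : ℕ, X (Sum.inl i) * pderiv (Sum.inr i) f

/-- ∇ = Σ_i y_i ∂/∂x_i. -/
noncomputable def nablaOp (f : PolyXY) : PolyXY :=
  ∑ᶠ i : ℕ, X (Sum.inr i) * pderiv (Sum.inl i) f

/-!
Pipes travel only south and west, so every tile on pipe `k` lies in a row `≤ w⁻¹ k`, which is
`< w⁻¹ w_p`. Hence the pipe leaving `p` westward does not exit the quadrant in row `p`, and so it
must turn south at a bump further west in that row.
-/

namespace PipeDream

lemma exists_west_eq_north (P : PipeDream) (i j : ℕ) :
    ∃ i', i ≤ i' ∧ P.west (i', j) = P.north (i, j) := by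
  obtain ⟨N, hN⟩ : ∃ N, ∀ q ∈ P.cross, q.1 < N :=
    ⟨P.cross.sup Prod.fst + 1, fun q hq => Nat.lt_succ_of_le (Finset.le_sup (f := Prod.fst) hq)⟩
  induction hd : N - i generalizing i with
  | zero =>
    have hbump : (i, j) ∉ P.cross := fun h => by have := hN _ h; omega
    exact ⟨i, le_rfl, P.west_bump _ hbump⟩
  | succ d ih =>
    by_cases hcross : (i, j) ∈ P.cross
    · obtain ⟨i', hi', hwest⟩ := ih (i + 1) (by omega)
      exact ⟨i', by omega, by rw [hwest, P.north_succ, P.south_cross _ hcross]⟩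
    · exact ⟨i, le_rfl, P.west_bump _ hcross⟩

namespace IsFor

variable {P : PipeDream} {w : Equiv.Perm ℕ}

lemma row_le_inv_west (hw : P.IsFor w) (i j : ℕ) : i ≤ w⁻¹ (P.west (i, j)) := by
  induction j generalizing i with
  | zero => simp [hw i]
  | succ j ih =>
    rw [← P.east_eq]
    by_cases hcross : (i, j) ∈ P.cross
    · rw [← P.west_cross _ hcross]
      exact ih i
    · obtain ⟨i', hi', hwest⟩ := P.exists_west_eq_north (i + 1) j
      rw [P.north_succ, P.south_bump _ hcross] at hwest
      exact (Nat.le_succ i).trans (hi'.trans (hwest ▸ ih i'))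

lemma row_le_inv_north (hw : P.IsFor w) (i j : ℕ) : i ≤ w⁻¹ (P.north (i, j)) := by
  obtain ⟨i', hi', hwest⟩ := P.exists_west_eq_north i j
  exact hi'.trans (hwest ▸ hw.row_le_inv_west i' j)

lemma row_le_inv_of_onPipe (hw : P.IsFor w) {k : ℕ} {q : ℕ × ℕ} (hq : P.OnPipe k q) :
    q.1 ≤ w⁻¹ k := by
  rcases hq with hnorth | heast
  · exact hnorth ▸ hw.row_le_inv_north q.1 q.2
  · rw [← heast, P.east_eq]
    exact hw.row_le_inv_west q.1 (q.2 + 1)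

lemma row_le_inv_of_nwOfPipe (hw : P.IsFor w) {k : ℕ} {p : ℕ × ℕ} (hp : P.NWOfPipe k p) :
    p.1 ≤ w⁻¹ k := by
  obtain ⟨q, hq, hrow, -⟩ := hp
  exact hrow.trans (hw.row_le_inv_of_onPipe hq)

lemma exists_bump_south_eq_west (hw : P.IsFor w) (i j : ℕ) (hexit : w⁻¹ (P.west (i, j)) ≠ i) :
    ∃ j', (i, j') ∉ P.cross ∧ P.south (i, j') = P.west (i, j) := by
  induction j with
  | zero => simp [hw i] at hexit
  | succ j ih =>
    rw [← P.east_eq] at hexit ⊢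
    by_cases hcross : (i, j) ∈ P.cross
    · rw [← P.west_cross _ hcross] at hexit ⊢
      exact ih hexit
    · exact ⟨j, hcross, P.south_bump _ hcross⟩

end IsFor

end PipeDream

theorem stmt13_general (w : Equiv.Perm ℕ) (P : PipeDream)
    (hP : P ∈ PD w) (p : ℕ × ℕ) (k : ℕ)
    (hnw : P.NWOfPipe k p) (hinv : (P.west p, k) ∈ invSet w⁻¹) :
    p.1 < w⁻¹ (P.west p) ∧
      ∃ q, q ∉ P.cross ∧ q.1 = p.1 ∧ P.south q = P.west p := by
  have hfor : P.IsFor w := hP.2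
  have hrow : p.1 < w⁻¹ (P.west p) := (hfor.row_le_inv_of_nwOfPipe hnw).trans_lt hinv.2
  obtain ⟨j, hbump, hsouth⟩ := hfor.exists_bump_south_eq_west p.1 p.2 hrow.ne'
  exact ⟨hrow, (p.1, j), hbump, rfl, hsouth⟩

/-- an (A,k)-aligned bump (p weakly northwest of pipe k and
(w_p, k) ∈ Inv(w⁻¹)) is slidable: w⁻¹(w_p) > row(p), i.e. there is a bump q in
the same row with s_q = w_p. -/
theorem stmt13 (w : Equiv.Perm ℕ) (hw : FinSupp w) (P : PipeDream)
    (hP : P ∈ PD w) (p : ℕ × ℕ) (hp : p ∉ P.cross) (k : ℕ)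
    (hnw : P.NWOfPipe k p) (hinv : (P.west p, k) ∈ invSet w⁻¹) :
    p.1 < w⁻¹ (P.west p) ∧
      ∃ q, q ∉ P.cross ∧ q.1 = p.1 ∧ P.south q = P.west p :=
  stmt13_general w P hP p k hnw hinv
end

section
/- Let π be a 132-avoiding permutation and w a permutation with w ≤_L π. If a < b < k satisfy (a,k) ∈ coInv(w⁻¹), (b,k) ∈ Inv(w⁻¹), and (a,b) ∈ coInv(π w⁻¹), then π contains a 132-pattern — contradiction. Hence under these hypotheses, (a,b) ∈ Inv(π w⁻¹). -/
open Equiv MvPolynomial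

/-! Along the left weak order the inversion set (indexed by positions) only grows, so
`(w⁻¹ k, w⁻¹ b)`, an inversion of `w`, is an inversion of `π`. If moreover
`π (w⁻¹ a) < π (w⁻¹ b)`, the positions `w⁻¹ a < w⁻¹ k < w⁻¹ b` carry a 132-pattern of `π`. -/

lemma swap_succ_lt_swap_succ_iff {k m n : ℕ} (h₁ : ¬(m = k ∧ n = k + 1))
    (h₂ : ¬(m = k + 1 ∧ n = k)) :
    Equiv.swap k (k + 1) m < Equiv.swap k (k + 1) n ↔ m < n := by
  simp only [Equiv.swap_apply_def]
  split_ifs <;> omega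

lemma invSet_swap_mul_of_lt {w : Equiv.Perm ℕ} {k : ℕ} (hk : w⁻¹ k < w⁻¹ (k + 1)) :
    invSet (Equiv.swap k (k + 1) * w) = insert (w⁻¹ k, w⁻¹ (k + 1)) (invSet w) := by
  rw [Equiv.Perm.coe_inv] at hk ⊢
  ext ⟨i, j⟩
  obtain ⟨m, rfl⟩ := w.symm.surjective i
  obtain ⟨n, rfl⟩ := w.symm.surjective j
  simp only [invSet, Set.mem_insert_iff, Set.mem_ofPred_eq, Prod.mk.injEq,
    Equiv.Perm.mul_apply, Equiv.apply_symm_apply, EmbeddingLike.apply_eq_iff_eq]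
  by_cases hmn : m = k ∧ n = k + 1
  · obtain ⟨rfl, rfl⟩ := hmn
    simp [hk]
  · by_cases hnm : m = k + 1 ∧ n = k
    · obtain ⟨rfl, rfl⟩ := hnm
      simp only [Equiv.swap_apply_left, Equiv.swap_apply_right]
      omega
    · rw [swap_succ_lt_swap_succ_iff (by omega) (by omega)]
      tauto

lemma WeakCover.invSet_subset {w u : Equiv.Perm ℕ} (h : WeakCover w u) :
    invSet w ⊆ invSet u := by
  obtain ⟨k, rfl, hlen⟩ := h
  rcases lt_or_gt_of_ne (w⁻¹.injective.ne k.succ_ne_self.symm) with hk | hk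
  · rw [invSet_swap_mul_of_lt hk]
    exact Set.subset_insert _ _
  · exfalso
    -- `s_k` would undo the inversion `(w⁻¹ (k + 1), w⁻¹ k)`, so `len` could not grow.
    set u := Equiv.swap k (k + 1) * w
    have hu : u⁻¹ k < u⁻¹ (k + 1) := by simpa [u, mul_inv_rev] using hk
    have hw : invSet w = insert (u⁻¹ k, u⁻¹ (k + 1)) (invSet u) := by
      rw [← invSet_swap_mul_of_lt hu]
      simp [u, ← mul_assoc]
    have hfin : (invSet u).Finite := Set.finite_of_ncard_ne_zero (by rw [← len]; omega)
    have hle : len u ≤ len w :=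
      Set.ncard_le_ncard (hw ▸ Set.subset_insert _ _) (hw ▸ hfin.insert _)
    omega

lemma invSet_subset_of_leL {w π : Equiv.Perm ℕ} (h : leL w π) : invSet w ⊆ invSet π := by
  induction h with
  | refl => exact subset_rfl
  | tail _ hcov ih => exact ih.trans hcov.invSet_subset

theorem stmt15_general (π w : Equiv.Perm ℕ) (hdom : Avoids132 π) (hw : leL w π)
    (a b k : ℕ) (hab : a < b)
    (h1 : (a, k) ∈ coinvSet w⁻¹) (h2 : (b, k) ∈ invSet w⁻¹) :
    (a, b) ∈ invSet (π * w⁻¹) := by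
  obtain ⟨-, hak⟩ := h1
  obtain ⟨hbk, hkb⟩ := h2
  have hkb_inv : (w⁻¹ k, w⁻¹ b) ∈ invSet w := ⟨hkb, by simpa using hbk⟩
  have hπkb : π (w⁻¹ b) < π (w⁻¹ k) := (invSet_subset_of_leL hw hkb_inv).2
  refine ⟨hab, ?_⟩
  by_contra! hle
  have hπab : π (w⁻¹ a) < π (w⁻¹ b) := hle.lt_of_ne (by simpa using hab.ne)
  exact hdom ⟨w⁻¹ a, w⁻¹ k, w⁻¹ b, hak, hkb, hπab, hπkb⟩

/-- if π is 132-avoiding, w ≤_L π, a < b < k,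
(a,k) ∈ coInv(w⁻¹) and (b,k) ∈ Inv(w⁻¹), then (a,b) ∈ Inv(πw⁻¹)
(for otherwise π would contain a 132-pattern). -/
theorem stmt15 (π w : Equiv.Perm ℕ) (hdom : Avoids132 π) (hw : leL w π)
    (a b k : ℕ) (hab : a < b) (hbk : b < k)
    (h1 : (a, k) ∈ coinvSet w⁻¹) (h2 : (b, k) ∈ invSet w⁻¹) :
    (a, b) ∈ invSet (π * w⁻¹) :=
  stmt15_general π w hdom hw a b k hab h1 h2
end
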